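/- For any finite alphabet α and any two vectors Q, V : Fin N → α, the maximum over all permutations σ of Fin N of the number of positions j with V(σ(j)) = Q(j) equals the cardinality of the multiset intersection of the values of Q and V, i.e., equals ∑_{a ∈ α} min(|{j : Q(j) = a}|, |{j : V(j) = a}|). -/

import Mathlib

open Finset

/-!
Under a permutation, each match of colour `a` pairs its own position where `Q` has colour `a`
with its own position where `V` has colour `a`, so colour `a` contributes at most the minimum of
the two counts.
Conversely, choose that many positions of each colour on both sides; the resulting partial
bijection matches colours and extends to a permutation of the index set.
-/

theorem Function.Embedding.exists_perm_apply_eq {β ι : Type*} [Finite ι] (φ ψ : β ↪ ι) :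
    ∃ σ : Equiv.Perm ι, ∀ x, σ (φ x) = ψ x := by
  classical
  let e := (Equiv.ofInjective φ φ.injective).symm.trans (Equiv.ofInjective ψ ψ.injective)
  refine ⟨e.extendSubtype, fun x => ?_⟩
  rw [Equiv.extendSubtype_apply_of_mem _ _ (Set.mem_range_self x)]
  simp [e]

theorem exists_embedding_sigma_fin_of_le_card_fiber {ι α : Type*} [Fintype ι] [DecidableEq α]
    (f : ι → α) (m : α → ℕ) (hm : ∀ a, m a ≤ #{j | f j = a}) :
    ∃ φ : (Σ a, Fin (m a)) ↪ ι, ∀ x, f (φ x) = x.1 := by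
  have e (a : α) : Fin (m a) ↪ {j // f j = a} :=
    (Function.Embedding.nonempty_of_card_le (by simpa [Fintype.card_subtype] using hm a)).some
  refine ⟨((Function.Embedding.refl α).sigmaMap e).trans
    (Equiv.sigmaFiberEquiv f).toEmbedding, fun ⟨a, i⟩ => (e a i).2⟩

section

variable {ι κ α : Type*} [Fintype ι] [Fintype κ] [Fintype α] [DecidableEq α]

theorem card_filter_apply_eq_le_sum_min_card_fiber (Q : ι → α) (V : κ → α) (σ : ι ↪ κ) :
    #{j | V (σ j) = Q j} ≤ ∑ a, min #{j | Q j = a} #{k | V k = a} := by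
  rw [card_eq_sum_card_fiberwise (f := Q) (t := univ) fun _ _ => mem_univ _]
  refine sum_le_sum fun a _ => le_min ?_ ?_
  · exact card_le_card fun j hj => by simp_all
  · refine card_le_card_of_injOn σ (fun j hj => ?_) σ.injective.injOn
    simp_all

theorem exists_perm_sum_min_card_fiber_le_card_filter (Q V : ι → α) :
    ∃ σ : Equiv.Perm ι, ∑ a, min #{j | Q j = a} #{j | V j = a} ≤ #{j | V (σ j) = Q j} := by
  obtain ⟨φ, hφ⟩ := exists_embedding_sigma_fin_of_le_card_fiber Q _ fun a => min_le_left _ _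
  obtain ⟨ψ, hψ⟩ := exists_embedding_sigma_fin_of_le_card_fiber V _ fun a => min_le_right _ _
  obtain ⟨σ, hσ⟩ := φ.exists_perm_apply_eq ψ
  refine ⟨σ, ?_⟩
  calc ∑ a, min #{j | Q j = a} #{j | V j = a}
      = #(univ.map φ) := by simp
    _ ≤ #{j | V (σ j) = Q j} := card_le_card fun j hj => by
        obtain ⟨x, -, rfl⟩ := mem_map.mp hj
        simp [hσ, hφ, hψ]

end

theorem mastermind_total_match_eq_multiset_inter_card
    {α : Type*} [Fintype α] [DecidableEq α] {N : ℕ} (Q V : Fin N → α) :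
    (Finset.univ : Finset (Equiv.Perm (Fin N))).sup
        (fun σ => (Finset.univ.filter (fun j => V (σ j) = Q j)).card)
      = ∑ a : α,
          min ((Finset.univ.filter (fun j => Q j = a)).card)
              ((Finset.univ.filter (fun j => V j = a)).card) := by
  refine le_antisymm (Finset.sup_le fun σ _ =>
    card_filter_apply_eq_le_sum_min_card_fiber Q V (Equiv.toEmbedding σ)) ?_
  obtain ⟨σ, hσ⟩ := exists_perm_sum_min_card_fiber_le_card_filter Q V
  exact hσ.trans (le_sup (f := fun σ : Equiv.Perm (Fin N) => #{j | V (σ j) = Q j}) (mem_univ σ))
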